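/- arXiv:2406.11676 — 3 statements merged into one kernel-verified Lean document; each statement's English description precedes it below -/
import Mathlib

section
/- Let d ≥ 1, α ∈ (1,2), and γ > 0. Let p : ℝ^d → ℝ be continuously differentiable with p, ∇p, and x ↦ ‖x‖·p(x) all integrable on ℝ^d, and suppose that 𝓕p(k) = exp(−γ^α ‖k‖^α) for all k ∈ ℝ^d. Then for every k ≠ 0 one has ‖k‖^{α−2} · 𝓕(∇p)(k) = 𝓕( x ↦ −(1/(α γ^α)) · p(x) · x )(k); i.e., in Fourier space the fractional score (−Δ)^{(α−2)/2}∇p / p of the α-stable density equals the linear function x ↦ −x/(α γ^α). -/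
open MeasureTheory Real Complex VectorFourier
open scoped RealInnerProductSpace FourierTransform

/-- In Fourier space, the fractional score of the α-stable density is the linear
function `x ↦ -x / (α γ^α)`. -/
theorem stmt_0 (d : ℕ) (hd : 1 ≤ d) (α γ : ℝ) (hα1 : 1 < α) (hα2 : α < 2) (hγ : 0 < γ)
    (p : EuclideanSpace ℝ (Fin d) → ℝ)
    (hp : ContDiff ℝ 1 p)
    (hpInt : Integrable p)
    (hgradInt : Integrable (fun x => gradient p x))
    (hnormInt : Integrable (fun x => ‖x‖ * p x))
    (hFourier : ∀ k : EuclideanSpace ℝ (Fin d),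
      ∫ x, Complex.exp (Complex.I * (⟪x, k⟫ : ℂ)) * (p x : ℂ)
        = Complex.exp (-(γ ^ α * ‖k‖ ^ α) : ℝ)) :
    ∀ k : EuclideanSpace ℝ (Fin d), k ≠ 0 → ∀ j : Fin d,
      ((‖k‖ ^ (α - 2) : ℝ) : ℂ) *
          ∫ x, Complex.exp (Complex.I * (⟪x, k⟫ : ℂ)) * ((gradient p x) j : ℂ)
        = ∫ x, Complex.exp (Complex.I * (⟪x, k⟫ : ℂ)) *
            ((-(1 / (α * γ ^ α)) * p x * x j : ℝ) : ℂ) := by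
  intro k hk j
  have hπ : (0:ℝ) < 2 * π := by positivity
  have hπ' : (2*π : ℝ) ≠ 0 := ne_of_gt hπ
  set ξ₀ : EuclideanSpace ℝ (Fin d) := (-(2*π))⁻¹ • k with hξ₀def
  have hkξ : (-(2*π)) • ξ₀ = k := by
    rw [hξ₀def, smul_smul, mul_inv_cancel₀ (neg_ne_zero.2 hπ'), one_smul]
  -- kernel conversion
  have key : ∀ (f : EuclideanSpace ℝ (Fin d) → ℂ) (ξ : EuclideanSpace ℝ (Fin d)),
      𝓕 f ξ = ∫ x, Complex.exp (Complex.I * (⟪x, (-(2*π)) • ξ⟫ : ℂ)) * f x := by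
    intro f ξ
    rw [Real.fourier_eq']
    congr 1; funext x
    rw [smul_eq_mul, real_inner_smul_right]
    congr 1
    push_cast
    ring
  have key' : ∀ f : EuclideanSpace ℝ (Fin d) → ℂ,
      𝓕 f ξ₀ = ∫ x, Complex.exp (Complex.I * (⟪x, k⟫ : ℂ)) * f x := by
    intro f; rw [key f ξ₀, hkξ]
  set P : EuclideanSpace ℝ (Fin d) → ℂ := fun x => (p x : ℂ) with hPdef
  have hPint : Integrable P := hpInt.ofReal
  have hpd : Differentiable ℝ p := hp.differentiable one_ne_zero
  have hPd : Differentiable ℝ P := Complex.ofRealCLM.differentiable.comp hpd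
  have hfd : ∀ x, fderiv ℝ P x = Complex.ofRealCLM.comp (fderiv ℝ p x) := by
    intro x
    have h : HasFDerivAt P (Complex.ofRealCLM.comp (fderiv ℝ p x)) x :=
      Complex.ofRealCLM.hasFDerivAt.comp x (hpd x).hasFDerivAt
    exact h.fderiv
  have hgrad : ∀ x (y : EuclideanSpace ℝ (Fin d)), fderiv ℝ p x y = ⟪gradient p x, y⟫ := by
    intro x y
    have h : gradient p x = (InnerProductSpace.toDual ℝ _).symm (fderiv ℝ p x) := rfl
    rw [h, InnerProductSpace.toDual_symm_apply]
  -- integrability of fderiv P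
  have hfdint : Integrable (fun x => fderiv ℝ P x) := by
    set Φ : EuclideanSpace ℝ (Fin d) →L[ℝ] (EuclideanSpace ℝ (Fin d) →L[ℝ] ℂ) :=
      (ContinuousLinearMap.compL ℝ (EuclideanSpace ℝ (Fin d)) ℝ ℂ Complex.ofRealCLM).comp
        (innerSL ℝ) with hΦ
    have h1 : Integrable (fun x => Φ (gradient p x)) := Φ.integrable_comp hgradInt
    refine h1.congr (Filter.Eventually.of_forall fun x => ?_)
    show Φ (gradient p x) = fderiv ℝ P x
    rw [hfd x]
    ext y
    simp only [hΦ, ContinuousLinearMap.comp_apply, ContinuousLinearMap.compL_apply, innerSL_apply_apply, hgrad x y]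
  set v : EuclideanSpace ℝ (Fin d) := EuclideanSpace.single j (1:ℝ) with hvdef
  have hinner_v : ∀ x : EuclideanSpace ℝ (Fin d), ⟪x, v⟫ = x j := by
    intro x
    rw [hvdef, EuclideanSpace.inner_single_right]
    simp
  set w : ℝ := ⟪ξ₀, v⟫ with hwdef
  -- LHS computation
  have hFd : 𝓕 (fderiv ℝ P) = fun ξ => fourierSMulRight (-innerSL ℝ) (𝓕 P) ξ :=
    Real.fourier_fderiv hPint hPd hfdint
  have hB : (∫ x, Complex.exp (Complex.I * (⟪x, k⟫ : ℂ)) * ((gradient p x) j : ℂ))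
      = (2*π*Complex.I) * (w : ℂ) * 𝓕 P ξ₀ := by
    have e1 : (fun x => ((gradient p x) j : ℂ)) = fun x => fderiv ℝ P x v := by
      funext x
      rw [hfd x, ContinuousLinearMap.comp_apply, hgrad x v]
      rw [hinner_v (gradient p x)]
      rfl
    calc (∫ x, Complex.exp (Complex.I * (⟪x, k⟫ : ℂ)) * ((gradient p x) j : ℂ))
        = 𝓕 (fun x => fderiv ℝ P x v) ξ₀ := by
          rw [key']
          exact congrArg _ (by funext x; rw [congrFun e1 x])
      _ = 𝓕 (fderiv ℝ P) ξ₀ v := (Real.fourier_continuousLinearMap_apply hfdint).symm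
      _ = fourierSMulRight (-innerSL ℝ) (𝓕 P) ξ₀ v := by rw [hFd]
      _ = (2*π*Complex.I) * (w : ℂ) * 𝓕 P ξ₀ := by
          rw [fourierSMulRight_apply]
          simp only [ContinuousLinearMap.neg_apply, innerSL_apply_apply, neg_smul, smul_neg]
          rw [hwdef, real_smul, smul_eq_mul]
          erw [innerSL_apply_apply]
          push_cast
          ring
  -- explicit form of 𝓕 P
  set c : ℝ := γ^α * (2*π)^α with hcdef
  set g : EuclideanSpace ℝ (Fin d) → ℝ := fun ξ => Real.exp (-(c * (‖ξ‖^2) ^ (α/2))) with hgdef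
  have hGeq : ∀ ξ, 𝓕 P ξ = ((g ξ : ℝ) : ℂ) := by
    intro ξ
    have hexp : -(γ^α * ‖(-(2*π)) • ξ‖^α) = -(c * (‖ξ‖^2) ^ (α/2)) := by
      have hn : ‖(-(2*π)) • ξ‖ = (2*π) * ‖ξ‖ := by
        rw [norm_smul, Real.norm_eq_abs, abs_neg, abs_of_pos hπ]
      have h2 : ((‖ξ‖^2 : ℝ)) ^ (α/2) = ‖ξ‖ ^ α := by
        rw [← Real.rpow_natCast ‖ξ‖ 2, ← Real.rpow_mul (norm_nonneg ξ)]
        norm_num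
        rw [show (2:ℝ) * (α/2) = α by ring]
      rw [hn, Real.mul_rpow hπ.le (norm_nonneg ξ), h2, hcdef]
      ring
    rw [key P ξ, hFourier ((-(2*π)) • ξ), hexp]
    show Complex.exp ((-(c * (‖ξ‖^2) ^ (α/2)) : ℝ) : ℂ)
        = ((Real.exp (-(c * (‖ξ‖^2) ^ (α/2))) : ℝ) : ℂ)
    exact (Complex.ofReal_exp _).symm
  -- derivative of g at ξ₀
  have hξ₀ne : ξ₀ ≠ 0 := by
    rw [hξ₀def]
    exact smul_ne_zero (inv_ne_zero (neg_ne_zero.2 hπ')) hk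
  set t₀ : ℝ := ‖ξ₀‖^2 with ht₀def
  have ht₀ : 0 < t₀ := by
    rw [ht₀def]; exact pow_pos (norm_pos_iff.2 hξ₀ne) 2
  have hq : HasFDerivAt (fun ξ : EuclideanSpace ℝ (Fin d) => ‖ξ‖^2)
      ((2:ℕ) • (innerSL ℝ ξ₀)) ξ₀ := (hasStrictFDerivAt_norm_sq ξ₀).hasFDerivAt
  have hr : HasDerivAt (fun t : ℝ => t ^ (α/2)) ((α/2) * t₀ ^ (α/2 - 1)) t₀ :=
    Real.hasDerivAt_rpow_const (Or.inl ht₀.ne')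
  have hqr : HasFDerivAt (fun ξ : EuclideanSpace ℝ (Fin d) => (‖ξ‖^2) ^ (α/2))
      (((α/2) * t₀ ^ (α/2 - 1)) • ((2:ℕ) • (innerSL ℝ ξ₀))) ξ₀ :=
    by have := hr.comp_hasFDerivAt ξ₀ hq; exact this
  have hneg : HasFDerivAt (fun ξ : EuclideanSpace ℝ (Fin d) => -(c * (‖ξ‖^2) ^ (α/2)))
      (-(c • (((α/2) * t₀ ^ (α/2 - 1)) • ((2:ℕ) • (innerSL ℝ ξ₀))))) ξ₀ :=
    (hqr.const_mul c).neg
  set D : EuclideanSpace ℝ (Fin d) →L[ℝ] ℝ :=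
    Real.exp (-(c * t₀ ^ (α/2))) • (-(c • (((α/2) * t₀ ^ (α/2 - 1)) • ((2:ℕ) • (innerSL ℝ ξ₀)))))
    with hDdef
  have hg : HasFDerivAt g D ξ₀ := by
    rw [hgdef, hDdef]
    exact (Real.hasDerivAt_exp (-(c * t₀ ^ (α/2)))).comp_hasFDerivAt ξ₀ hneg
  have hG : HasFDerivAt (fun ξ => ((g ξ : ℝ) : ℂ)) (Complex.ofRealCLM.comp D) ξ₀ :=
    Complex.ofRealCLM.hasFDerivAt.comp ξ₀ hg
  -- derivative of 𝓕 P via differentiation under the integral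
  have hnormP : Integrable (fun x => ‖x‖ * ‖P x‖) := by
    refine hnormInt.norm.congr (Filter.Eventually.of_forall fun x => ?_)
    show ‖‖x‖ * p x‖ = ‖x‖ * ‖P x‖
    rw [norm_mul, norm_norm]
    simp [hPdef]
  have hD1 : HasFDerivAt (𝓕 P) (𝓕 (fourierSMulRight (innerSL ℝ) P) ξ₀) ξ₀ :=
    Real.hasFDerivAt_fourier hPint hnormP ξ₀
  have hFG : 𝓕 P = fun ξ => ((g ξ : ℝ) : ℂ) := funext hGeq
  have hunique : 𝓕 (fourierSMulRight (innerSL ℝ) P) ξ₀ = Complex.ofRealCLM.comp D :=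
    (hFG ▸ hD1).unique hG
  -- integrability of fourierSMulRight
  have hFSRint : Integrable (fourierSMulRight (innerSL ℝ) P) := by
    refine (hnormP.const_mul (2*π)).mono'
      hPint.aestronglyMeasurable.fourierSMulRight
      (Filter.Eventually.of_forall fun x => ?_)
    show ‖fourierSMulRight (innerSL ℝ) P x‖ ≤ 2*π * (‖x‖ * ‖P x‖)
    rw [norm_fourierSMulRight, innerSL_apply_norm]
    exact le_of_eq (by ring)
  -- evaluate hunique at v
  set A : ℂ := ∫ x, Complex.exp (Complex.I * (⟪x, k⟫ : ℂ)) * (((x j : ℝ) : ℂ) * P x) with hAdef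
  have eqnA : (-(2*π*Complex.I)) * A = ((D v : ℝ) : ℂ) := by
    have h1 : 𝓕 (fourierSMulRight (innerSL ℝ) P) ξ₀ v
        = 𝓕 (fun x => fourierSMulRight (innerSL ℝ) P x v) ξ₀ :=
      Real.fourier_continuousLinearMap_apply hFSRint
    have h2 : (fun x => fourierSMulRight (innerSL ℝ) P x v)
        = fun x => (-(2*π*Complex.I)) * (((x j : ℝ) : ℂ) * P x) := by
      funext x
      rw [fourierSMulRight_apply, innerSL_apply_apply, hinner_v x, real_smul, smul_eq_mul]
    have h3 : 𝓕 (fun x => (-(2*π*Complex.I)) * (((x j : ℝ) : ℂ) * P x)) ξ₀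
        = (-(2*π*Complex.I)) * A := by
      rw [key', hAdef, ← integral_const_mul]
      congr 1; funext x; ring
    calc (-(2*π*Complex.I)) * A
        = 𝓕 (fourierSMulRight (innerSL ℝ) P) ξ₀ v := by rw [h1, h2, h3]
      _ = ((D v : ℝ) : ℂ) := by rw [hunique]; rfl
  -- value of D v
  have hDv : D v = Real.exp (-(c * t₀ ^ (α/2))) * (-(c * ((α/2) * t₀ ^ (α/2 - 1) * (2 * w)))) := by
    rw [hDdef]
    simp only [ContinuousLinearMap.smul_apply, ContinuousLinearMap.neg_apply,
      innerSL_apply_apply, smul_eq_mul, hwdef]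
    ring
  -- the real power computation
  have hnξ₀ : ‖ξ₀‖ = (2*π)⁻¹ * ‖k‖ := by
    rw [hξ₀def, norm_smul, Real.norm_eq_abs, abs_inv, abs_neg, abs_of_pos hπ]
  have ht : t₀ ^ (α/2 - 1) = (2*π) ^ (2 - α) * ‖k‖ ^ (α - 2) := by
    rw [ht₀def, hnξ₀, ← Real.rpow_natCast ((2*π)⁻¹ * ‖k‖) 2,
      ← Real.rpow_mul (by positivity)]
    have : ((2:ℕ):ℝ) * (α/2 - 1) = α - 2 := by push_cast; ring
    rw [this, Real.mul_rpow (by positivity) (norm_nonneg k),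
      Real.inv_rpow hπ.le, ← Real.rpow_neg hπ.le, neg_sub]
  have h2π : (2*π) ^ α * (2*π) ^ (2 - α) = (2*π)^(2:ℕ) := by
    rw [← Real.rpow_add hπ, ← Real.rpow_natCast (2*π) 2]
    norm_num
  have hγα : (0:ℝ) < γ ^ α := Real.rpow_pos_of_pos hγ α
  have hα0 : α ≠ 0 := by positivity
  have hreal : (1/(α*γ^α)) * (c * ((α/2) * t₀ ^ (α/2 - 1) * (2*w)))
      = (2*π)^(2:ℕ) * ‖k‖ ^ (α - 2) * w := by
    rw [ht, hcdef]
    field_simp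
    rw [h2π]
    ring
  -- final assembly
  set r1 : ℝ := ‖k‖ ^ (α - 2) with hr1def
  rw [hB]
  have hRHS : (∫ x, Complex.exp (Complex.I * (⟪x, k⟫ : ℂ)) *
      ((-(1 / (α * γ ^ α)) * p x * x j : ℝ) : ℂ))
      = ((-(1 / (α * γ ^ α)) : ℝ) : ℂ) * A := by
    rw [hAdef, ← integral_const_mul]
    congr 1; funext x
    push_cast
    ring
  rw [hRHS, hGeq ξ₀]
  have hexpv : g ξ₀ = Real.exp (-(c * t₀ ^ (α/2))) := by
    simp only [hgdef, ht₀def]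
  rw [hexpv]
  set Ee : ℝ := Real.exp (-(c * t₀ ^ (α/2))) with hEdef
  have hDvC : ((D v : ℝ) : ℂ) = ((Ee * (-(c * ((α/2) * t₀ ^ (α/2 - 1) * (2 * w)))) : ℝ) : ℂ) :=
    congrArg _ hDv
  have hreal2 : (-(1 / (α * γ ^ α))) * (Ee * (-(c * ((α/2) * t₀ ^ (α/2 - 1) * (2 * w)))))
      = (2*π)^(2:ℕ) * r1 * w * Ee := by linear_combination Ee * hreal
  have hne : (-(2*(π:ℂ)*Complex.I)) ≠ 0 := by
    simp only [neg_ne_zero, mul_ne_zero_iff]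
    refine ⟨⟨two_ne_zero, ?_⟩, Complex.I_ne_zero⟩
    exact_mod_cast Real.pi_ne_zero
  apply mul_left_cancel₀ hne
  have hstep : (-(2*(π:ℂ)*Complex.I)) * (((-(1 / (α * γ ^ α)) : ℝ) : ℂ) * A)
      = ((((2*π)^(2:ℕ) * r1 * w * Ee : ℝ)) : ℂ) := by
    have h0 : (-(2*(π:ℂ)*Complex.I)) * (((-(1 / (α * γ ^ α)) : ℝ) : ℂ) * A)
        = ((-(1 / (α * γ ^ α)) : ℝ) : ℂ) * ((-(2*π*Complex.I)) * A) := by ring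
    rw [h0, eqnA, hDvC, ← Complex.ofReal_mul, hreal2]
  rw [hstep]
  push_cast
  linear_combination (-(4*(π:ℂ)^2*(r1:ℂ)*(w:ℂ)*(Ee:ℂ))) * Complex.I_sq
end

section
/- Let d ≥ 1, let A : ℝ × ℝ^d → ℝ^d be continuously differentiable, let D : ℝ × ℝ^d → ℝ^{d×d} be continuously differentiable in x, and let p : ℝ × ℝ^d → ℝ be everywhere positive, continuously differentiable in t and twice continuously differentiable in x, satisfying the divergence-form Fokker–Planck equation ∂_t p = −∇_x·(A p) + (1/2)∇_x·(D ∇_x p). Then q := log p satisfies the second-order LL-PDE ∂_t q = (1/2)∇_x·(D ∇_x q) + (1/2)⟨∇_x q, D ∇_x q⟩ − ⟨A, ∇_x q⟩ − ∇_x·A. -/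
/-- Partial derivative in the `i`-th coordinate direction of `ℝ^d`. -/
noncomputable def pd {d : ℕ} (i : Fin d) (f : EuclideanSpace ℝ (Fin d) → ℝ)
    (x : EuclideanSpace ℝ (Fin d)) : ℝ :=
  fderiv ℝ f x (EuclideanSpace.single i 1)

lemma pd_log {d : ℕ} (i : Fin d) (f : EuclideanSpace ℝ (Fin d) → ℝ)
    (x : EuclideanSpace ℝ (Fin d)) (hf : DifferentiableAt ℝ f x) (h : f x ≠ 0) :
    pd i (fun y => Real.log (f y)) x = pd i f x / f x := by
  unfold pd
  rw [(hf.hasFDerivAt.log h).fderiv]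
  simp [div_eq_inv_mul]

lemma pd_sum {d n : ℕ} (i : Fin d) (F : Fin n → EuclideanSpace ℝ (Fin d) → ℝ)
    (x : EuclideanSpace ℝ (Fin d)) (h : ∀ j, DifferentiableAt ℝ (F j) x) :
    pd i (fun y => ∑ j, F j y) x = ∑ j, pd i (F j) x := by
  unfold pd
  rw [fderiv_fun_sum (fun j _ => h j)]
  simp

lemma pd_mul {d : ℕ} (i : Fin d) (f g : EuclideanSpace ℝ (Fin d) → ℝ)
    (x : EuclideanSpace ℝ (Fin d)) (hf : DifferentiableAt ℝ f x)
    (hg : DifferentiableAt ℝ g x) :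
    pd i (fun y => f y * g y) x = pd i f x * g x + f x * pd i g x := by
  unfold pd
  rw [fderiv_fun_mul hf hg]
  simp [smul_eq_mul]
  ring

lemma pd_inv {d : ℕ} (i : Fin d) (g : EuclideanSpace ℝ (Fin d) → ℝ)
    (x : EuclideanSpace ℝ (Fin d)) (hg : DifferentiableAt ℝ g x) (h : g x ≠ 0) :
    pd i (fun y => (g y)⁻¹) x = -pd i g x / g x ^ 2 := by
  unfold pd
  have : HasFDerivAt (fun y => (g y)⁻¹) ((-(g x ^ 2)⁻¹) • fderiv ℝ g x) x :=
    (hasDerivAt_inv h).comp_hasFDerivAt x hg.hasFDerivAt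
  rw [this.fderiv]
  simp [smul_eq_mul]
  field_simp

lemma pd_div {d : ℕ} (i : Fin d) (f g : EuclideanSpace ℝ (Fin d) → ℝ)
    (x : EuclideanSpace ℝ (Fin d)) (hf : DifferentiableAt ℝ f x)
    (hg : DifferentiableAt ℝ g x) (h : g x ≠ 0) :
    pd i (fun y => f y / g y) x = (pd i f x * g x - f x * pd i g x) / g x ^ 2 := by
  have h1 : pd i (fun y => f y * (g y)⁻¹) x
      = pd i f x * (g x)⁻¹ + f x * pd i (fun y => (g y)⁻¹) x :=
    pd_mul i f (fun y => (g y)⁻¹) x hf (hg.inv h)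
  simp only [div_eq_mul_inv]
  rw [h1, pd_inv i g x hg h]
  field_simp
  ring

/-- If a positive density `p` solves the divergence-form Fokker–Planck equation
`∂ₜ p = -∇·(A p) + (1/2)∇·(D ∇p)`, then `q = log p` solves the LL-PDE
`∂ₜ q = (1/2)∇·(D∇q) + (1/2)⟨∇q, D∇q⟩ - ⟨A, ∇q⟩ - ∇·A`. -/
theorem stmt_10 (d : ℕ) (hd : 1 ≤ d)
    (A : ℝ → EuclideanSpace ℝ (Fin d) → EuclideanSpace ℝ (Fin d))
    (hA : ContDiff ℝ 1 fun tx : ℝ × EuclideanSpace ℝ (Fin d) => A tx.1 tx.2)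
    (D : ℝ → EuclideanSpace ℝ (Fin d) → Fin d → Fin d → ℝ)
    (hD : ∀ t i j, ContDiff ℝ 1 fun x => D t x i j)
    (p : ℝ → EuclideanSpace ℝ (Fin d) → ℝ)
    (hpos : ∀ t x, 0 < p t x)
    (hpt : ∀ x, ContDiff ℝ 1 fun t => p t x)
    (hpx : ∀ t, ContDiff ℝ 2 (p t))
    (hFP : ∀ t x, deriv (fun s => p s x) t
      = -(∑ i, pd i (fun y => A t y i * p t y) x)
        + (1 / 2) * ∑ i, pd i (fun y => ∑ j, D t y i j * pd j (p t) y) x) :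
    ∀ t x, deriv (fun s => Real.log (p s x)) t
      = (1 / 2) * ∑ i, pd i (fun y =>
            ∑ j, D t y i j * pd j (fun z => Real.log (p t z)) y) x
        + (1 / 2) * ∑ i, ∑ j,
            pd i (fun z => Real.log (p t z)) x * D t x i j *
              pd j (fun z => Real.log (p t z)) x
        - ∑ i, A t x i * pd i (fun z => Real.log (p t z)) x
        - ∑ i, pd i (fun y => A t y i) x := by
  intro t x
  have hPne : p t x ≠ 0 := (hpos t x).ne'
  have hpx1 : ContDiff ℝ 1 (p t) := (hpx t).of_le one_le_two
  have hpD : ∀ y, DifferentiableAt ℝ (p t) y := fun y => hpx1.differentiable one_ne_zero y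
  have hpdj : ∀ j : Fin d, ContDiff ℝ 1 (fun y => pd j (p t) y) := by
    intro j
    have h1 : ContDiff ℝ 1 (fderiv ℝ (p t)) :=
      (hpx t).fderiv_right (by norm_num)
    exact h1.clm_apply contDiff_const
  have hpdjD : ∀ (j : Fin d) y, DifferentiableAt ℝ (fun z => pd j (p t) z) y :=
    fun j y => (hpdj j).differentiable one_ne_zero y
  have hDd : ∀ (i j : Fin d) y, DifferentiableAt ℝ (fun z => D t z i j) y :=
    fun i j y => (hD t i j).differentiable one_ne_zero y
  have hAt : ContDiff ℝ 1 (fun y => A t y) :=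
    hA.comp (contDiff_const.prodMk contDiff_id)
  have hAiD : ∀ (i : Fin d) y, DifferentiableAt ℝ (fun z => A t z i) y :=
    fun i y => ((contDiff_euclidean.mp hAt i).differentiable one_ne_zero) y
  -- time derivative of log
  have hdp : HasDerivAt (fun s => p s x) (deriv (fun s => p s x) t) t :=
    (((hpt x).differentiable one_ne_zero) t).hasDerivAt
  have hlogt : deriv (fun s => Real.log (p s x)) t = deriv (fun s => p s x) t / p t x :=
    (hdp.log hPne).deriv
  -- spatial derivatives of log
  have hlogpd : ∀ (j : Fin d) y, pd j (fun z => Real.log (p t z)) y = pd j (p t) y / p t y :=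
    fun j y => pd_log j (p t) y (hpD y) (hpos t y).ne'
  -- rewrite the inner function of the first sum
  have hfun : ∀ i : Fin d,
      (fun y => ∑ j, D t y i j * pd j (fun z => Real.log (p t z)) y)
        = fun y => (∑ j, D t y i j * pd j (p t) y) / p t y := by
    intro i; funext y
    rw [Finset.sum_div]
    refine Finset.sum_congr rfl fun j _ => ?_
    rw [hlogpd j y, mul_div_assoc]
  have hSdiff : ∀ (i : Fin d) y,
      DifferentiableAt ℝ (fun z => ∑ j, D t z i j * pd j (p t) z) y := by
    intro i y
    exact DifferentiableAt.fun_sum fun j _ => (hDd i j y).mul (hpdjD j y)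
  have hT1 : ∀ i : Fin d,
      pd i (fun y => ∑ j, D t y i j * pd j (fun z => Real.log (p t z)) y) x
        = (pd i (fun z => ∑ j, D t z i j * pd j (p t) z) x * p t x
            - (∑ j, D t x i j * pd j (p t) x) * pd i (p t) x) / p t x ^ 2 := by
    intro i
    rw [hfun i, pd_div i _ (p t) x (hSdiff i x) (hpD x) hPne]
  have hApd : ∀ i : Fin d, pd i (fun y => A t y i * p t y) x
      = pd i (fun y => A t y i) x * p t x + A t x i * pd i (p t) x :=
    fun i => pd_mul i _ _ x (hAiD i x) (hpD x)
  rw [hlogt, hFP t x]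
  simp only [hT1]
  simp only [hApd, hlogpd]
  -- now pure algebra with finitely many sums
  rw [Finset.sum_add_distrib, ← Finset.sum_mul]
  have e2 : ∑ i, (pd i (fun z => ∑ j, D t z i j * pd j (p t) z) x * p t x
        - (∑ j, D t x i j * pd j (p t) x) * pd i (p t) x) / p t x ^ 2
      = ((∑ i, pd i (fun z => ∑ j, D t z i j * pd j (p t) z) x) * p t x
          - ∑ i, (∑ j, D t x i j * pd j (p t) x) * pd i (p t) x) / p t x ^ 2 := by
    rw [← Finset.sum_div, Finset.sum_sub_distrib, Finset.sum_mul]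
  have e3 : ∑ i, ∑ j, pd i (p t) x / p t x * D t x i j * (pd j (p t) x / p t x)
      = (∑ i, (∑ j, D t x i j * pd j (p t) x) * pd i (p t) x) / p t x ^ 2 := by
    rw [Finset.sum_div]
    refine Finset.sum_congr rfl fun i _ => ?_
    rw [Finset.sum_mul, Finset.sum_div]
    refine Finset.sum_congr rfl fun j _ => ?_
    field_simp
  have e4 : ∑ i, A t x i * (pd i (p t) x / p t x)
      = (∑ i, A t x i * pd i (p t) x) / p t x := by
    rw [Finset.sum_div]
    exact Finset.sum_congr rfl fun i _ => (mul_div_assoc _ _ _).symm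
  rw [e2, e3, e4]
  generalize (∑ i, pd i (fun z => ∑ j, D t z i j * pd j (p t) z) x) = a
  generalize (∑ i, (∑ j, D t x i j * pd j (p t) x) * pd i (p t) x) = b
  generalize (∑ i, A t x i * pd i (p t) x) = c
  generalize (∑ i, pd i (fun y => A t y i) x) = e
  field_simp
  ring
end

section
/- Let d ≥ 1, let μ₀ be a probability measure on ℝ^d (the law of the initial state x₀), and for each x₀ let p(·|x₀) : ℝ^d → (0,∞) be a conditional probability density that is continuously differentiable in x, with (x, x₀) ↦ p(x|x₀) measurable. Define the marginal p(x) = ∫ p(x|x₀) dμ₀(x₀), assume p(x) > 0 and continuously differentiable with ∇p(x) = ∫ ∇_x p(x|x₀) dμ₀(x₀) for all x (differentiation under the integral), and assume the integrability of: ∫∫ ‖s(x)‖² p(x|x₀) dx dμ₀, ∫∫ ‖∇_x log p(x|x₀)‖² p(x|x₀) dx dμ₀, and ∫ ‖∇ log p(x)‖² p(x) dx, where s : ℝ^d → ℝ^d is measurable. Then ∫∫ ‖s(x) − ∇_x log p(x|x₀)‖² p(x|x₀) dx dμ₀(x₀) − ∫ ‖s(x) − ∇ log p(x)‖² p(x)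 dx = ∫∫ ‖∇_x log p(x|x₀)‖² p(x|x₀) dx dμ₀(x₀) − ∫ ‖∇ log p(x)‖² p(x) dx. In particular, the difference between the conditional score matching objective and the oracle score matching objective is a constant independent of s, so minimizing one in s is equivalent to minimizing the other. -/
open MeasureTheory Filter
open scoped RealInnerProductSpace

section aux

variable {F : Type*} [NormedAddCommGroup F] [InnerProductSpace ℝ F] [CompleteSpace F]

lemma gradient_log_eq (f : F → ℝ) (x : F) (hf : DifferentiableAt ℝ f x) (hx : f x ≠ 0) :
    gradient (fun y => Real.log (f y)) x = (f x)⁻¹ • gradient f x := by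
  have h2 : HasFDerivAt f (InnerProductSpace.toDual ℝ F (gradient f x)) x :=
    hf.hasGradientAt.hasFDerivAt
  have h3 := h2.log hx
  have h4 : HasGradientAt (fun y => Real.log (f y)) ((f x)⁻¹ • gradient f x) x := by
    rw [hasGradientAt_iff_hasFDerivAt]
    convert h3 using 1
    exacts [rfl, LinearIsometryEquiv.map_smul _ _]
  exact h4.gradient

lemma gradient_eq_sum (f : F → ℝ) (x : F) {ι : Type*} [Fintype ι]
    (b : OrthonormalBasis ι ℝ F) :
    gradient f x = ∑ i, (fderiv ℝ f x (b i)) • b i := by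
  rw [← b.sum_repr' (gradient f x)]
  congr 1
  ext i
  congr 1
  rw [real_inner_comm]
  rw [gradient]
  exact InnerProductSpace.toDual_symm_apply

end aux

lemma measurable_gradient_uncurry {d : ℕ}
    (pc : EuclideanSpace ℝ (Fin d) → EuclideanSpace ℝ (Fin d) → ℝ)
    (hpcC1 : ∀ x₀, ContDiff ℝ 1 (pc x₀))
    (hpcmeas : Measurable (Function.uncurry pc)) :
    Measurable (fun q : EuclideanSpace ℝ (Fin d) × EuclideanSpace ℝ (Fin d) =>
      gradient (pc q.1) q.2) := by
  have hfd : ∀ v : EuclideanSpace ℝ (Fin d),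
      Measurable (fun q : EuclideanSpace ℝ (Fin d) × EuclideanSpace ℝ (Fin d) =>
        fderiv ℝ (pc q.1) q.2 v) := by
    intro v
    apply measurable_of_tendsto_metrizable
      (f := fun (n : ℕ) q => (n : ℝ) • (pc q.1 (q.2 + ((n : ℝ))⁻¹ • v) - pc q.1 q.2))
    · intro n
      have h1 : Measurable (fun q : EuclideanSpace ℝ (Fin d) × EuclideanSpace ℝ (Fin d) =>
          pc q.1 (q.2 + ((n : ℝ))⁻¹ • v)) :=
        hpcmeas.comp (measurable_fst.prodMk (measurable_snd.add_const _))
      have h2 : Measurable (fun q : EuclideanSpace ℝ (Fin d) × EuclideanSpace ℝ (Fin d) =>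
          pc q.1 q.2) := hpcmeas.comp (measurable_fst.prodMk measurable_snd)
      simpa [smul_eq_mul] using (h1.sub h2).const_mul ((n:ℝ))
    · rw [tendsto_pi_nhds]
      intro q
      exact ((hpcC1 q.1).differentiable one_ne_zero q.2).hasFDerivAt.lim v
        (by simpa using tendsto_natCast_atTop_atTop (R := ℝ))
  have hb := EuclideanSpace.basisFun (Fin d) ℝ
  have key : (fun q : EuclideanSpace ℝ (Fin d) × EuclideanSpace ℝ (Fin d) =>
      gradient (pc q.1) q.2)
      = fun q => ∑ i, (fderiv ℝ (pc q.1) q.2 (hb i)) • hb i := by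
    funext q
    exact gradient_eq_sum _ _ hb
  rw [key]
  exact Finset.measurable_sum _ fun i _ => (hfd (hb i)).smul_const _

/-- The difference between the conditional score matching objective and the oracle
score matching objective is a constant independent of the model `s`, so minimizing
one is equivalent to minimizing the other. -/
theorem stmt_13 (d : ℕ) (hd : 1 ≤ d)
    (μ₀ : Measure (EuclideanSpace ℝ (Fin d))) [IsProbabilityMeasure μ₀]
    (pc : EuclideanSpace ℝ (Fin d) → EuclideanSpace ℝ (Fin d) → ℝ)
    (hpcpos : ∀ x₀ x, 0 < pc x₀ x)
    (hpcC1 : ∀ x₀, ContDiff ℝ 1 (pc x₀))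
    (hpcmeas : Measurable (Function.uncurry pc))
    (hpcdens : ∀ x₀, ∫ x, pc x₀ x = 1)
    (pm : EuclideanSpace ℝ (Fin d) → ℝ)
    (hpm : ∀ x, pm x = ∫ x₀, pc x₀ x ∂μ₀)
    (hpmpos : ∀ x, 0 < pm x)
    (hpmC1 : ContDiff ℝ 1 pm)
    (hgrad : ∀ x, gradient pm x = ∫ x₀, gradient (pc x₀) x ∂μ₀)
    (s : EuclideanSpace ℝ (Fin d) → EuclideanSpace ℝ (Fin d)) (hs : Measurable s)
    (hint1 : Integrable
      (fun q : EuclideanSpace ℝ (Fin d) × EuclideanSpace ℝ (Fin d) =>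
        ‖s q.2‖ ^ 2 * pc q.1 q.2) (μ₀.prod volume))
    (hint2 : Integrable
      (fun q : EuclideanSpace ℝ (Fin d) × EuclideanSpace ℝ (Fin d) =>
        ‖gradient (fun y => Real.log (pc q.1 y)) q.2‖ ^ 2 * pc q.1 q.2) (μ₀.prod volume))
    (hint3 : Integrable fun x => ‖gradient (fun y => Real.log (pm y)) x‖ ^ 2 * pm x) :
    (∫ x₀, (∫ x, ‖s x - gradient (fun y => Real.log (pc x₀ y)) x‖ ^ 2 * pc x₀ x) ∂μ₀)
        - ∫ x, ‖s x - gradient (fun y => Real.log (pm y)) x‖ ^ 2 * pm x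
      = (∫ x₀, (∫ x, ‖gradient (fun y => Real.log (pc x₀ y)) x‖ ^ 2 * pc x₀ x) ∂μ₀)
          - ∫ x, ‖gradient (fun y => Real.log (pm y)) x‖ ^ 2 * pm x := by
  classical
  -- pointwise gradient-of-log identities
  have hgc : ∀ (x₀ x : EuclideanSpace ℝ (Fin d)), gradient (fun y => Real.log (pc x₀ y)) x
      = (pc x₀ x)⁻¹ • gradient (pc x₀) x := fun x₀ x =>
    gradient_log_eq _ _ (((hpcC1 x₀).differentiable one_ne_zero) x) (hpcpos x₀ x).ne'
  have hGc : ∀ (x₀ x : EuclideanSpace ℝ (Fin d)), gradient (pc x₀) x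
      = pc x₀ x • gradient (fun y => Real.log (pc x₀ y)) x := by
    intro x₀ x
    rw [hgc, smul_smul, mul_inv_cancel₀ (hpcpos x₀ x).ne', one_smul]
  have hgm : ∀ x : EuclideanSpace ℝ (Fin d), gradient (fun y => Real.log (pm y)) x
      = (pm x)⁻¹ • gradient pm x := fun x =>
    gradient_log_eq _ _ ((hpmC1.differentiable one_ne_zero) x) (hpmpos x).ne'
  have hGm : ∀ x : EuclideanSpace ℝ (Fin d), gradient pm x = pm x • gradient (fun y => Real.log (pm y)) x := by
    intro x
    rw [hgm, smul_smul, mul_inv_cancel₀ (hpmpos x).ne', one_smul]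
  -- measurability
  have mpc : Measurable (fun q : EuclideanSpace ℝ (Fin d) × EuclideanSpace ℝ (Fin d) => pc q.1 q.2) := hpcmeas
  have mG : Measurable (fun q : EuclideanSpace ℝ (Fin d) × EuclideanSpace ℝ (Fin d) => gradient (pc q.1) q.2) :=
    measurable_gradient_uncurry pc hpcC1 hpcmeas
  have mgradpm : Measurable (gradient pm) := by
    have h : gradient pm = fun x => (InnerProductSpace.toDual ℝ (EuclideanSpace ℝ (Fin d))).symm (fderiv ℝ pm x) := rfl
    rw [h]
    exact (LinearIsometryEquiv.continuous _).measurable.comp (measurable_fderiv ℝ pm)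
  -- product-space integrability of the cross term
  have hB : Integrable (fun q : EuclideanSpace ℝ (Fin d) × EuclideanSpace ℝ (Fin d) => ⟪s q.2, gradient (pc q.1) q.2⟫)
      (μ₀.prod volume) := by
    apply Integrable.mono' (hint1.add hint2)
    · exact ((hs.comp measurable_snd).inner mG).aestronglyMeasurable
    · filter_upwards with q
      have h1 : ‖gradient (pc q.1) q.2‖
          = pc q.1 q.2 * ‖gradient (fun y => Real.log (pc q.1 y)) q.2‖ := by
        rw [hGc, norm_smul, Real.norm_eq_abs, abs_of_pos (hpcpos q.1 q.2)]
      calc ‖⟪s q.2, gradient (pc q.1) q.2⟫‖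
          ≤ ‖s q.2‖ * ‖gradient (pc q.1) q.2‖ := norm_inner_le_norm _ _
        _ ≤ ‖s q.2‖ ^ 2 * pc q.1 q.2
            + ‖gradient (fun y => Real.log (pc q.1 y)) q.2‖ ^ 2 * pc q.1 q.2 := by
          rw [h1]
          nlinarith [sq_nonneg (‖s q.2‖ - ‖gradient (fun y => Real.log (pc q.1 y)) q.2‖),
            (hpcpos q.1 q.2).le, norm_nonneg (s q.2),
            norm_nonneg (gradient (fun y => Real.log (pc q.1 y)) q.2),
            mul_nonneg (norm_nonneg (s q.2))
              (norm_nonneg (gradient (fun y => Real.log (pc q.1 y)) q.2))]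
  -- integrability of sections
  have hpc_int : ∀ x : EuclideanSpace ℝ (Fin d), Integrable (fun x₀ => pc x₀ x) μ₀ := by
    intro x
    by_contra h
    have h0 := hpm x
    rw [integral_undef h] at h0
    exact absurd h0 (hpmpos x).ne'
  have G_int : ∀ᵐ x ∂(volume : Measure (EuclideanSpace ℝ (Fin d))), Integrable (fun x₀ => gradient (pc x₀) x) μ₀ := by
    filter_upwards [hint2.prod_left_ae] with x hx
    apply Integrable.mono' ((hpc_int x).add hx)
    · exact (mG.comp (measurable_id.prodMk measurable_const)).aestronglyMeasurable
    · filter_upwards with x₀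
      simp only [Pi.add_apply]
      rw [hGc x₀ x, norm_smul, Real.norm_eq_abs, abs_of_pos (hpcpos x₀ x)]
      nlinarith [sq_nonneg (1 - ‖gradient (fun y => Real.log (pc x₀ y)) x‖),
        (hpcpos x₀ x).le, norm_nonneg (gradient (fun y => Real.log (pc x₀ y)) x)]
  -- a.e. identity for the cross term
  have hBx : ∀ᵐ x ∂(volume : Measure (EuclideanSpace ℝ (Fin d))),
      (∫ x₀, ⟪s x, gradient (pc x₀) x⟫ ∂μ₀) = ⟪s x, gradient pm x⟫ := by
    filter_upwards [G_int] with x hx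
    have h2 := ContinuousLinearMap.integral_comp_comm (innerSL ℝ (s x)) hx
    simp only [innerSL_apply_apply] at h2
    rw [h2, ← hgrad x]
  -- marginal integrabilities
  have hAm : Integrable (fun x : EuclideanSpace ℝ (Fin d) => ‖s x‖ ^ 2 * pm x) volume := by
    have h := hint1.integral_prod_right
    have h2 : (fun y : EuclideanSpace ℝ (Fin d) => ∫ x₀, ‖s y‖ ^ 2 * pc x₀ y ∂μ₀) = fun y => ‖s y‖ ^ 2 * pm y := by
      funext y
      rw [integral_const_mul, ← hpm]
    rwa [h2] at h
  have hBm : Integrable (fun x : EuclideanSpace ℝ (Fin d) => ⟪s x, gradient pm x⟫) volume := by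
    apply Integrable.mono' (hAm.add hint3)
    · exact (hs.inner mgradpm).aestronglyMeasurable
    · filter_upwards with x
      have h1 : ‖gradient pm x‖ = pm x * ‖gradient (fun y => Real.log (pm y)) x‖ := by
        rw [hGm, norm_smul, Real.norm_eq_abs, abs_of_pos (hpmpos x)]
      calc ‖⟪s x, gradient pm x⟫‖
          ≤ ‖s x‖ * ‖gradient pm x‖ := norm_inner_le_norm _ _
        _ ≤ ‖s x‖ ^ 2 * pm x + ‖gradient (fun y => Real.log (pm y)) x‖ ^ 2 * pm x := by
          rw [h1]
          nlinarith [sq_nonneg (‖s x‖ - ‖gradient (fun y => Real.log (pm y)) x‖),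
            (hpmpos x).le, norm_nonneg (s x),
            norm_nonneg (gradient (fun y => Real.log (pm y)) x),
            mul_nonneg (norm_nonneg (s x))
              (norm_nonneg (gradient (fun y => Real.log (pm y)) x))]
  -- pointwise expansion
  have key : ∀ (v w : EuclideanSpace ℝ (Fin d)) (r : ℝ), ‖v - w‖ ^ 2 * r
      = ‖v‖ ^ 2 * r - 2 * ⟪v, r • w⟫ + ‖w‖ ^ 2 * r := by
    intro v w r
    rw [norm_sub_sq_real, real_inner_smul_right]
    ring
  have hFc : (fun q : EuclideanSpace ℝ (Fin d) × EuclideanSpace ℝ (Fin d) => ‖s q.2 - gradient (fun y => Real.log (pc q.1 y)) q.2‖ ^ 2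
      * pc q.1 q.2)
      = fun q => (‖s q.2‖ ^ 2 * pc q.1 q.2 - 2 * ⟪s q.2, gradient (pc q.1) q.2⟫)
          + ‖gradient (fun y => Real.log (pc q.1 y)) q.2‖ ^ 2 * pc q.1 q.2 := by
    funext q
    rw [key, ← hGc]
  have hFm : (fun x : EuclideanSpace ℝ (Fin d) => ‖s x - gradient (fun y => Real.log (pm y)) x‖ ^ 2 * pm x)
      = fun x => (‖s x‖ ^ 2 * pm x - 2 * ⟪s x, gradient pm x⟫)
          + ‖gradient (fun y => Real.log (pm y)) x‖ ^ 2 * pm x := by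
    funext x
    rw [key, ← hGm]
  -- combined integrabilities
  have hIc : Integrable (fun q : EuclideanSpace ℝ (Fin d) × EuclideanSpace ℝ (Fin d) =>
      ‖s q.2 - gradient (fun y => Real.log (pc q.1 y)) q.2‖ ^ 2 * pc q.1 q.2)
      (μ₀.prod volume) := by
    rw [hFc]
    exact (hint1.sub (hB.const_mul 2)).add hint2
  have hIm : Integrable (fun x : EuclideanSpace ℝ (Fin d) =>
      ‖s x - gradient (fun y => Real.log (pm y)) x‖ ^ 2 * pm x) volume := by
    rw [hFm]
    exact (hAm.sub (hBm.const_mul 2)).add hint3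
  -- Fubini computations
  have iA : ∫ q : EuclideanSpace ℝ (Fin d) × EuclideanSpace ℝ (Fin d), ‖s q.2‖ ^ 2 * pc q.1 q.2 ∂(μ₀.prod volume)
      = ∫ x, ‖s x‖ ^ 2 * pm x := by
    rw [integral_prod_symm _ hint1]
    congr 1
    funext x
    show (∫ x₀, ‖s x‖ ^ 2 * pc x₀ x ∂μ₀) = ‖s x‖ ^ 2 * pm x
    rw [integral_const_mul, ← hpm]
  have iB : ∫ q : EuclideanSpace ℝ (Fin d) × EuclideanSpace ℝ (Fin d), ⟪s q.2, gradient (pc q.1) q.2⟫ ∂(μ₀.prod volume)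
      = ∫ x, ⟪s x, gradient pm x⟫ := by
    rw [integral_prod_symm _ hB]
    show (∫ x, ∫ x₀, ⟪s x, gradient (pc x₀) x⟫ ∂μ₀)
        = ∫ x, ⟪s x, gradient pm x⟫
    exact integral_congr_ae hBx
  have hB2 : Integrable (fun q : EuclideanSpace ℝ (Fin d) × EuclideanSpace ℝ (Fin d) =>
      2 * ⟪s q.2, gradient (pc q.1) q.2⟫) (μ₀.prod volume) := hB.const_mul 2
  have hAB : Integrable (fun q : EuclideanSpace ℝ (Fin d) × EuclideanSpace ℝ (Fin d) =>
      ‖s q.2‖ ^ 2 * pc q.1 q.2 - 2 * ⟪s q.2, gradient (pc q.1) q.2⟫) (μ₀.prod volume) :=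
    hint1.sub hB2
  have hBm2 : Integrable (fun x : EuclideanSpace ℝ (Fin d) =>
      2 * ⟪s x, gradient pm x⟫) volume := hBm.const_mul 2
  have hABm : Integrable (fun x : EuclideanSpace ℝ (Fin d) =>
      ‖s x‖ ^ 2 * pm x - 2 * ⟪s x, gradient pm x⟫) volume := hAm.sub hBm2
  -- reduce iterated integrals to product integrals
  have tcond : (∫ x₀, (∫ x, ‖s x - gradient (fun y => Real.log (pc x₀ y)) x‖ ^ 2
      * pc x₀ x) ∂μ₀)
      = (∫ x, ‖s x‖ ^ 2 * pm x) - 2 * (∫ x, ⟪s x, gradient pm x⟫)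
        + ∫ q : EuclideanSpace ℝ (Fin d) × EuclideanSpace ℝ (Fin d), ‖gradient (fun y => Real.log (pc q.1 y)) q.2‖ ^ 2 * pc q.1 q.2
            ∂(μ₀.prod volume) := by
    rw [← integral_prod _ hIc, hFc,
      integral_add hAB hint2,
      integral_sub hint1 hB2, integral_const_mul, iA, iB]
  have tmarg : (∫ x, ‖s x - gradient (fun y => Real.log (pm y)) x‖ ^ 2 * pm x)
      = (∫ x, ‖s x‖ ^ 2 * pm x) - 2 * (∫ x, ⟪s x, gradient pm x⟫)
        + ∫ x, ‖gradient (fun y => Real.log (pm y)) x‖ ^ 2 * pm x := by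
    rw [hFm, integral_add hABm hint3,
      integral_sub hAm hBm2, integral_const_mul]
  have tC : (∫ x₀, (∫ x, ‖gradient (fun y => Real.log (pc x₀ y)) x‖ ^ 2 * pc x₀ x) ∂μ₀)
      = ∫ q : EuclideanSpace ℝ (Fin d) × EuclideanSpace ℝ (Fin d), ‖gradient (fun y => Real.log (pc q.1 y)) q.2‖ ^ 2 * pc q.1 q.2
          ∂(μ₀.prod volume) := (integral_prod _ hint2).symm
  rw [tcond, tmarg, tC]
  ring
end
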